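/- Let E_A be a primitive quantum channel on M_D(ℂ) with d linearly independent Kraus operators whose span S_1(A) contains an invertible matrix. Then i(A) ≤ D² − d + 1. -/

import Mathlib

open Matrix
open scoped ComplexOrder

variable {D : ℕ} {ι : Type*} [Fintype ι]

/-- The completely positive map with Kraus operators `A k`. -/
noncomputable def krausMap (A : ι → Matrix (Fin D) (Fin D) ℂ)
    (X : Matrix (Fin D) (Fin D) ℂ) : Matrix (Fin D) (Fin D) ℂ :=
  ∑ k, A k * X * (A k)ᴴ

/-- The product `A_{w 0} * A_{w 1} * ⋯ * A_{w (n-1)}` of Kraus operators along a word `w`. -/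
noncomputable def wordProd (A : ι → Matrix (Fin D) (Fin D) ℂ) {n : ℕ} (w : Fin n → ι) :
    Matrix (Fin D) (Fin D) ℂ :=
  (List.ofFn fun i => A (w i)).prod

/-- `S_n(A)`: the span of all products of exactly `n` Kraus operators. -/
noncomputable def krausSpan (A : ι → Matrix (Fin D) (Fin D) ℂ) (n : ℕ) :
    Submodule ℂ (Matrix (Fin D) (Fin D) ℂ) :=
  Submodule.span ℂ {M | ∃ w : Fin n → ι, M = wordProd A w}

/-- `H_n(A,φ) = S_n(A)|φ⟩`. -/
noncomputable def krausVecSpan (A : ι → Matrix (Fin D) (Fin D) ℂ) (n : ℕ)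
    (φ : Fin D → ℂ) : Submodule ℂ (Fin D → ℂ) :=
  Submodule.span ℂ {v | ∃ w : Fin n → ι, v = wordProd A w *ᵥ φ}

/-- A quantum channel is primitive if some power maps every pure state to a
positive definite (full-rank) operator. -/
def Primitive (A : ι → Matrix (Fin D) (Fin D) ℂ) : Prop :=
  ∃ n, ∀ φ : Fin D → ℂ, φ ≠ 0 →
    ((krausMap A)^[n] (vecMulVec φ (star φ))).PosDef

/-- `q(E_A)`: the quantum index of primitivity. -/
noncomputable def qIndex (A : ι → Matrix (Fin D) (Fin D) ℂ) : ℕ :=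
  sInf {n | ∀ φ : Fin D → ℂ, φ ≠ 0 →
    ((krausMap A)^[n] (vecMulVec φ (star φ))).PosDef}

/-- `i(A)`: the minimal `n` with `S_n(A) = M_D`. -/
noncomputable def iIndex (A : ι → Matrix (Fin D) (Fin D) ℂ) : ℕ :=
  sInf {n | krausSpan A n = ⊤}

/-- Trace preservation, `∑ k, A_k† A_k = 1`. -/
def TracePreserving (A : ι → Matrix (Fin D) (Fin D) ℂ) : Prop :=
  ∑ k, (A k)ᴴ * A k = 1

/-!
The spaces `S_n(A)` are the powers `S_1(A) ^ n` of the subspace `S_1(A)` of the matrix algebra.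
For a subspace `V` of a finite-dimensional algebra containing a unit `u`, left multiplication by
`u` embeds `V ^ n` into `V ^ (n + 1)`, so dimensions never drop. If the dimension stalls at some
step, then `V ^ (n + 1) = u V ^ n`, hence `V ^ (n + 2) = u V ^ n V = u V ^ (n + 1)`, and it stalls
forever. So until `V ^ n` is the whole algebra its dimension grows by at least one per step,
starting from `dim V = d`, which gives `i(A) - 1 ≤ D² - d`.
-/

open Module

namespace Submodule

variable {K A : Type*} [Field K] [Ring A] [Algebra K A]

theorem finrank_span_singleton_mul_of_isUnit {u : A} (hu : IsUnit u) (p : Submodule K A) :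
    finrank K (span K {u} * p) = finrank K p := by
  obtain ⟨u, rfl⟩ := hu
  rw [span_singleton_mul]
  exact (u.mulLeftLinearEquiv K A).finrank_map_eq p

theorem pow_add_succ_eq_span_singleton_mul {V : Submodule K A} {u : A} {n : ℕ}
    (h : V ^ (n + 1) = span K {u} * V ^ n) (m : ℕ) :
    V ^ (n + m + 1) = span K {u} * V ^ (n + m) := by
  induction m with
  | zero => exact h
  | succ m ih =>
    calc V ^ (n + (m + 1) + 1) = V ^ (n + m + 1) * V := pow_succ _ _
      _ = span K {u} * (V ^ (n + m) * V) := by rw [ih, mul_assoc]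
      _ = span K {u} * V ^ (n + m + 1) := by rw [← pow_succ]

variable [FiniteDimensional K A]

theorem finrank_pow_lt_finrank_pow_succ {V : Submodule K A} {u : A} (hu : IsUnit u)
    (huV : u ∈ V) {n m : ℕ} (hn : V ^ n ≠ ⊤) (hm : V ^ (n + m) = ⊤) :
    finrank K ↥(V ^ n) < finrank K ↥(V ^ (n + 1)) := by
  have hle : span K {u} * V ^ n ≤ V ^ (n + 1) := by
    rw [pow_succ']
    exact mul_le_mul' (span_singleton_le_iff_mem u V |>.mpr huV) le_rfl
  by_contra! hge
  have hstep : V ^ (n + 1) = span K {u} * V ^ n :=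
    (eq_of_le_of_finrank_le hle
      (by rwa [finrank_span_singleton_mul_of_isUnit hu])).symm
  have hconst : ∀ k, finrank K ↥(V ^ (n + k)) = finrank K ↥(V ^ n) := by
    intro k
    induction k with
    | zero => rfl
    | succ k ih =>
      rw [← add_assoc, pow_add_succ_eq_span_singleton_mul hstep,
        finrank_span_singleton_mul_of_isUnit hu, ih]
  have := hconst m
  rw [hm, finrank_top] at this
  exact finrank_lt hn |>.ne' this

theorem finrank_add_le_finrank_pow_succ {V : Submodule K A} {u : A} (hu : IsUnit u)
    (huV : u ∈ V) {N : ℕ} (hN : V ^ N = ⊤) (hmin : ∀ j < N, V ^ j ≠ ⊤) :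
    ∀ j < N, finrank K V + j ≤ finrank K ↥(V ^ (j + 1)) := by
  intro j hj
  induction j with
  | zero => rw [zero_add, pow_one, add_zero]
  | succ j ih =>
    have hlt := finrank_pow_lt_finrank_pow_succ hu huV (hmin (j + 1) hj)
      (m := N - (j + 1)) (by rwa [Nat.add_sub_cancel' hj.le])
    have := ih (by omega)
    omega

theorem sInf_pow_eq_top_le {V : Submodule K A} {u : A} (hu : IsUnit u) (huV : u ∈ V) :
    sInf {n | V ^ n = ⊤} ≤ finrank K A - finrank K V + 1 := by
  set N := sInf {n | V ^ n = ⊤}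
  rcases N.eq_zero_or_pos with h0 | hpos
  · simp [h0]
  have hN : V ^ N = ⊤ := Nat.sInf_mem (Nat.nonempty_of_pos_sInf hpos)
  have := finrank_add_le_finrank_pow_succ hu huV hN (fun j hj => Nat.notMem_of_lt_sInf hj)
    (N - 1) (by omega)
  rw [Nat.sub_add_cancel hpos, hN, finrank_top] at this
  omega

end Submodule

section Kraus

omit [Fintype ι]

theorem wordProd_snoc (A : ι → Matrix (Fin D) (Fin D) ℂ) {n : ℕ} (w : Fin n → ι) (k : ι) :
    wordProd A (Fin.snoc w k) = wordProd A w * A k := by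
  rw [wordProd, List.ofFn_succ']
  simp [wordProd]

theorem krausSpan_zero (A : ι → Matrix (Fin D) (Fin D) ℂ) : krausSpan A 0 = 1 := by
  simp [krausSpan, wordProd, Submodule.one_eq_span]

theorem krausSpan_succ (A : ι → Matrix (Fin D) (Fin D) ℂ) (n : ℕ) :
    krausSpan A (n + 1) = krausSpan A n * Submodule.span ℂ (Set.range A) := by
  rw [krausSpan, krausSpan, Submodule.span_mul_span]
  congr 1
  ext M
  constructor
  · rintro ⟨w, rfl⟩
    rw [← Fin.snoc_init_self w, wordProd_snoc]
    exact Set.mul_mem_mul ⟨_, rfl⟩ ⟨_, rfl⟩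
  · rintro ⟨_, ⟨w, rfl⟩, _, ⟨k, rfl⟩, rfl⟩
    exact ⟨Fin.snoc w k, (wordProd_snoc A w k).symm⟩

theorem krausSpan_eq_pow (A : ι → Matrix (Fin D) (Fin D) ℂ) (n : ℕ) :
    krausSpan A n = Submodule.span ℂ (Set.range A) ^ n := by
  induction n with
  | zero => exact krausSpan_zero A
  | succ n ih => rw [krausSpan_succ, ih, Submodule.pow_succ]

theorem iIndex_eq_sInf_pow (A : ι → Matrix (Fin D) (Fin D) ℂ) :
    iIndex A = sInf {n | Submodule.span ℂ (Set.range A) ^ n = ⊤} := by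
  simp only [iIndex, krausSpan_eq_pow]

end Kraus

theorem stmt17_general (D d : ℕ) (A : Fin d → Matrix (Fin D) (Fin D) ℂ)
    (hli : LinearIndependent ℂ A)
    (hinv : ∃ B ∈ krausSpan A 1, IsUnit B) :
    iIndex A ≤ D ^ 2 - d + 1 := by
  obtain ⟨B, hB, hBu⟩ := hinv
  rw [krausSpan_eq_pow, pow_one] at hB
  have hdim : finrank ℂ (Matrix (Fin D) (Fin D) ℂ) = D ^ 2 := by
    simp [Module.finrank_matrix, sq]
  have hd : finrank ℂ (Submodule.span ℂ (Set.range A)) = d := by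
    simpa using finrank_span_eq_card hli
  simpa [iIndex_eq_sInf_pow, hdim, hd] using Submodule.sInf_pow_eq_top_le hBu hB

theorem stmt17 (D d : ℕ) (A : Fin d → Matrix (Fin D) (Fin D) ℂ)
    (hTP : TracePreserving A) (hprim : Primitive A)
    (hli : LinearIndependent ℂ A)
    (hinv : ∃ B ∈ krausSpan A 1, IsUnit B) :
    iIndex A ≤ D ^ 2 - d + 1 :=
  stmt17_general D d A hli hinv
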